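/- arXiv:1704.06997 — 2 statements merged into one kernel-verified Lean document; each statement's English description precedes it below -/
import Mathlib

section
/- For α > -1/2, every x ∈ ℝ \ {0}, and every nonnegative integer m, one has ∫_{-|x|}^{|x|} Θ₀(x,y) · b_{2m}(y) · |y|^{2α+1} dy = b_{2m+1}(x), where Θ₀(x,y) = sgn(x)/(2|x|^{2α+1}) + sgn(y)/(2|y|^{2α+1}), b_{2m}(y) = (y/2)^{2m}/((α+1)_m · m!), and b_{2m+1}(x) = (x/2)^{2m+1}/((α+1)_{m+1} · m!). -/
/-!
Multiplying out, the `y`-half of `Θ₀` cancels the weight `|y| ^ (2α+1)` and leaves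
`sign y * b_{2m}(y) / 2`, an odd function, which integrates to zero over `[-|x|, |x|]`. The
`x`-half is the constant `sign x / (2 |x| ^ (2α+1))` times the even function
`y ^ (2m) * |y| ^ (2α+1)`, whose integral is `2 |x| ^ (2m+2α+2) / (2m+2α+2)`; the powers of `|x|`
recombine with `sign x` into `x ^ (2m+1)`, and `2m+2α+2 = 2 (α+1+m)` is the factor that turns
`(α+1)_m` into `(α+1)_{m+1}`.
-/

open Polynomial Real intervalIntegral

namespace Real

theorem sign_mul_abs (x : ℝ) : Real.sign x * |x| = x := by
  rcases lt_trichotomy x 0 with h | rfl | h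
  · rw [sign_of_neg h, abs_of_neg h, neg_one_mul, neg_neg]
  · rw [sign_zero, zero_mul]
  · rw [sign_of_pos h, abs_of_pos h, one_mul]

theorem monotone_sign : Monotone Real.sign := by
  intro a b hab
  simp only [Real.sign]
  split_ifs <;> linarith

end Real

namespace intervalIntegral

variable {E : Type*} [NormedAddCommGroup E] [NormedSpace ℝ E]

theorem integral_symm_eq_zero_of_odd {f : ℝ → E} (hf : ∀ y, f (-y) = -f y) (a : ℝ) :
    ∫ y in -a..a, f y = 0 := by
  have h := integral_comp_neg (a := -a) (b := a) f
  simp only [hf, integral_neg, neg_neg] at h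
  have h2 : (2 : ℝ) • ∫ y in -a..a, f y = 0 := by
    rw [two_smul]
    nth_rewrite 1 [← h]
    exact neg_add_cancel _
  exact (smul_eq_zero.mp h2).resolve_left two_ne_zero

theorem integral_symm_eq_two_smul_of_even {f : ℝ → E} (hf : ∀ y, f (-y) = f y) {a : ℝ}
    (hint : IntervalIntegrable f MeasureTheory.volume (-a) a) :
    ∫ y in -a..a, f y = (2 : ℝ) • ∫ y in 0..a, f y := by
  have h := integral_comp_neg (a := 0) (b := a) f
  simp only [hf, neg_zero] at h
  rw [← integral_add_adjacent_intervals (b := 0)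
    (hint.mono_set (Set.uIcc_subset_uIcc_left (by simp [Set.mem_uIcc, le_total])))
    (hint.mono_set (Set.uIcc_subset_uIcc_right (by simp [Set.mem_uIcc, le_total]))), ← h,
    two_smul]

end intervalIntegral

theorem intervalIntegrable_sign_mul {g : ℝ → ℝ} (hg : Continuous g) (a b : ℝ) :
    IntervalIntegrable (fun y => Real.sign y * g y) MeasureTheory.volume a b :=
  Real.monotone_sign.intervalIntegrable.mul_continuousOn hg.continuousOn

theorem continuous_pow_mul_abs_rpow (n : ℕ) {s : ℝ} (hs : 0 ≤ s) :
    Continuous fun y : ℝ => y ^ n * |y| ^ s :=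
  (continuous_pow n).mul ((continuous_rpow_const hs).comp continuous_abs)

theorem integral_pow_mul_abs_rpow_symm {n : ℕ} (hn : Even n) {s : ℝ} (hs : 0 ≤ s) {a : ℝ}
    (ha : 0 ≤ a) :
    ∫ y in -a..a, y ^ n * |y| ^ s = 2 * (a ^ (n + s + 1) / (n + s + 1)) := by
  have hpow : ∀ y ∈ Set.uIcc 0 a, y ^ n * |y| ^ s = y ^ ((n : ℝ) + s) := by
    intro y hy
    have hy0 : 0 ≤ y := (Set.uIcc_of_le ha ▸ hy).1
    rw [abs_of_nonneg hy0, rpow_add_of_nonneg hy0 (Nat.cast_nonneg n) hs, rpow_natCast]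
  have hexp : -1 < (n : ℝ) + s := by linarith [(Nat.cast_nonneg n : (0 : ℝ) ≤ n)]
  rw [integral_symm_eq_two_smul_of_even
      (fun y => by rw [neg_pow, abs_neg, hn.neg_one_pow, one_mul])
      ((continuous_pow_mul_abs_rpow n hs).intervalIntegrable _ _),
    integral_congr hpow, integral_rpow (Or.inl hexp), zero_rpow (by positivity), sub_zero,
    smul_eq_mul]

theorem theta_mul_abs_rpow {s : ℝ} (hs : s ≠ 0) (x y B : ℝ) :
    (Real.sign x / (2 * |x| ^ s) + Real.sign y / (2 * |y| ^ s)) * B * |y| ^ s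
      = Real.sign x / (2 * |x| ^ s) * (B * |y| ^ s) + Real.sign y * B / 2 := by
  rcases eq_or_ne y 0 with rfl | hy
  · simp [zero_rpow hs]
  · have : |y| ^ s ≠ 0 := (rpow_pos_of_pos (abs_pos.mpr hy) s).ne'
    field_simp

theorem integral_theta_mul_pow_mul_abs_rpow {n : ℕ} (hn : Even n) {s : ℝ} (hs : 0 < s) {x : ℝ}
    (hx : x ≠ 0) (c : ℝ) :
    ∫ y in -|x|..|x|,
        (Real.sign x / (2 * |x| ^ s) + Real.sign y / (2 * |y| ^ s)) * (c * y ^ n) * |y| ^ s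
      = c * x ^ (n + 1) / (n + s + 1) := by
  have hsplit : ∀ y : ℝ,
      (Real.sign x / (2 * |x| ^ s) + Real.sign y / (2 * |y| ^ s)) * (c * y ^ n) * |y| ^ s
        = Real.sign x / (2 * |x| ^ s) * c * (y ^ n * |y| ^ s)
          + c / 2 * (Real.sign y * y ^ n) := by
    intro y
    rw [theta_mul_abs_rpow hs.ne']
    ring
  have hodd : ∫ y in -|x|..|x|, Real.sign y * y ^ n = 0 :=
    integral_symm_eq_zero_of_odd (fun y => by rw [Real.sign_neg, hn.neg_pow, neg_mul]) _
  simp_rw [hsplit]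
  rw [integral_add (((continuous_pow_mul_abs_rpow n hs.le).intervalIntegrable _ _).const_mul _)
      ((intervalIntegrable_sign_mul (continuous_pow n) _ _).const_mul _),
    integral_const_mul, integral_const_mul, hodd,
    integral_pow_mul_abs_rpow_symm hn hs.le (abs_nonneg x)]
  have hpow : |x| ^ ((n : ℝ) + s + 1) = |x| ^ (n + 1) * |x| ^ s := by
    rw [show (n : ℝ) + s + 1 = ((n + 1 : ℕ) : ℝ) + s by push_cast; ring,
      rpow_add (abs_pos.mpr hx), rpow_natCast]
  have hsign : Real.sign x * |x| ^ (n + 1) = x ^ (n + 1) := by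
    rw [pow_succ', ← mul_assoc, sign_mul_abs, hn.pow_abs, ← pow_succ']
  have hxs : 0 < |x| ^ s := rpow_pos_of_pos (abs_pos.mpr hx) s
  rw [hpow, mul_zero, add_zero, ← hsign]
  field_simp

theorem stmt1 (α : ℝ) (hα : α > -(1/2 : ℝ)) (x : ℝ) (hx : x ≠ 0) (m : ℕ) :
    (∫ y in (-|x|)..(|x|),
        (Real.sign x / (2 * |x| ^ (2 * α + 1)) + Real.sign y / (2 * |y| ^ (2 * α + 1))) *
          ((y / 2) ^ (2 * m) / ((ascPochhammer ℝ m).eval (α + 1) * (Nat.factorial m))) *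
          |y| ^ (2 * α + 1)) =
      (x / 2) ^ (2 * m + 1) / ((ascPochhammer ℝ (m + 1)).eval (α + 1) * (Nat.factorial m)) := by
  set C := (ascPochhammer ℝ m).eval (α + 1) * (Nat.factorial m)
  have hP : 0 < (ascPochhammer ℝ m).eval (α + 1) := ascPochhammer_pos m (α + 1) (by linarith)
  have hαm : 0 < α + 1 + m := by linarith [(Nat.cast_nonneg m : (0 : ℝ) ≤ m)]
  have hb : ∀ y : ℝ, (y / 2) ^ (2 * m) / C = (2 ^ (2 * m) * C)⁻¹ * y ^ (2 * m) := by
    intro y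
    rw [div_pow]
    ring
  simp_rw [hb, integral_theta_mul_pow_mul_abs_rpow (even_two_mul m)
    (by linarith : (0 : ℝ) < 2 * α + 1) hx]
  rw [show ((2 * m : ℕ) : ℝ) + (2 * α + 1) + 1 = 2 * (α + 1 + m) by push_cast; ring,
    ascPochhammer_succ_eval, div_pow]
  simp only [C]
  field_simp
  ring
end

section
/- For α > -1/2, every x ∈ ℝ \ {0}, and every nonnegative integer m, one has ∫_{-|x|}^{|x|} Θ₀(x,y) · b_{2m+1}(y) · |y|^{2α+1} dy = b_{2m+2}(x), where Θ₀(x,y) = sgn(x)/(2|x|^{2α+1}) + sgn(y)/(2|y|^{2α+1}), b_{2m+1}(y) = (y/2)^{2m+1}/((α+1)_{m+1} · m!), and b_{2m+2}(x) = (x/2)^{2m+2}/((α+1)_{m+1} · (m+1)!). -/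
/-!
Off `y = 0` the second summand of `Θ₀(x, y)` cancels the weight `|y|^(2α+1)`, so the integrand
is `sgn x / (2|x|^(2α+1)) · b_{2m+1}(y) |y|^(2α+1)`, which is odd in `y` and integrates to zero
over `[-|x|, |x|]`, plus `sgn y · b_{2m+1}(y) / 2 = |y/2|^(2m+1) / (2 (α+1)_{m+1} m!)`, which is
even and integrates to `b_{2m+2}(x)`.
-/

open Polynomial Real

section Parity

variable {E : Type*} [NormedAddCommGroup E] [NormedSpace ℝ E]

theorem integral_symm_eq_zero_of_odd {f : ℝ → E} (hf : ∀ y, f (-y) = -f y) (c : ℝ) :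
    ∫ y in -c..c, f y = 0 := by
  have hflip : ∫ y in -c..c, f y = -∫ y in -c..c, f y := by
    simpa [hf] using (intervalIntegral.integral_comp_neg (a := -c) (b := c) (f := f)).symm
  rw [eq_neg_iff_add_eq_zero, ← two_smul ℝ] at hflip
  exact (smul_eq_zero.mp hflip).resolve_left two_ne_zero

theorem integral_symm_eq_two_smul_of_even {f : ℝ → E} (hf : ∀ y, f (-y) = f y) {c : ℝ}
    (hint : IntervalIntegrable f MeasureTheory.volume (-c) c) :
    ∫ y in -c..c, f y = (2 : ℝ) • ∫ y in 0..c, f y := by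
  have hzero : (0 : ℝ) ∈ Set.uIcc (-c) c := by
    rcases le_total 0 c with hc | hc
    · exact Set.mem_uIcc.mpr (Or.inl ⟨by linarith, hc⟩)
    · exact Set.mem_uIcc.mpr (Or.inr ⟨hc, by linarith⟩)
  have hneg : ∫ y in -c..0, f y = ∫ y in 0..c, f y := by
    simpa [hf] using (intervalIntegral.integral_comp_neg (a := 0) (b := c) (f := f)).symm
  rw [← intervalIntegral.integral_add_adjacent_intervals
      (hint.mono_set (Set.uIcc_subset_uIcc_left hzero))
      (hint.mono_set (Set.uIcc_subset_uIcc_right hzero)), hneg, two_smul]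

end Parity

theorem integral_abs_pow_symm (n : ℕ) {c : ℝ} (hc : 0 ≤ c) :
    ∫ y in -c..c, |y| ^ n = 2 * c ^ (n + 1) / (n + 1) := by
  have hcont : Continuous fun y : ℝ => |y| ^ n := continuous_abs.pow n
  rw [integral_symm_eq_two_smul_of_even (fun y => by rw [abs_neg]) (hcont.intervalIntegrable _ _),
    smul_eq_mul, intervalIntegral.integral_congr (g := fun y => y ^ n), integral_pow]
  · ring
  · intro y hy
    rw [Set.uIcc_of_le hc] at hy
    simp only [abs_of_nonneg hy.1]

theorem Real.sign_mul_pow_of_odd {n : ℕ} (hn : Odd n) (y : ℝ) : sign y * y ^ n = |y| ^ n := by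
  rcases lt_trichotomy y 0 with hy | rfl | hy
  · rw [sign_of_neg hy, abs_of_neg hy, hn.neg_pow]
    ring
  · simp [hn.pos.ne']
  · rw [sign_of_pos hy, abs_of_pos hy, one_mul]

theorem Real.sign_div_two_abs_rpow_mul (y p f : ℝ) :
    sign y / (2 * |y| ^ p) * f * |y| ^ p = sign y * f / 2 := by
  rcases eq_or_ne y 0 with rfl | hy
  · simp
  · have : |y| ^ p ≠ 0 := (rpow_pos_of_pos (abs_pos.mpr hy) p).ne'
    field_simp

theorem theta_zero_mul_half_pow_mul_abs_rpow (x : ℝ) {n : ℕ} (hn : Odd n) (p C y : ℝ) :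
    (sign x / (2 * |x| ^ p) + sign y / (2 * |y| ^ p)) * ((y / 2) ^ n / C) * |y| ^ p =
      sign x / (2 * |x| ^ p) * ((y / 2) ^ n / C * |y| ^ p) + |y| ^ n / (2 ^ (n + 1) * C) := by
  rw [add_mul, add_mul, sign_div_two_abs_rpow_mul, ← sign_mul_pow_of_odd hn, div_pow, pow_succ]
  ring

theorem stmt2_general (α : ℝ) (hα : α > -(1/2 : ℝ)) (x : ℝ) (m : ℕ) :
    (∫ y in (-|x|)..(|x|),
        (Real.sign x / (2 * |x| ^ (2 * α + 1)) + Real.sign y / (2 * |y| ^ (2 * α + 1))) *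
          ((y / 2) ^ (2 * m + 1) / ((ascPochhammer ℝ (m + 1)).eval (α + 1) * (Nat.factorial m))) *
          |y| ^ (2 * α + 1)) =
      (x / 2) ^ (2 * m + 2) /
        ((ascPochhammer ℝ (m + 1)).eval (α + 1) * (Nat.factorial (m + 1))) := by
  have hp : 0 ≤ 2 * α + 1 := by linarith
  have hC : 0 < (ascPochhammer ℝ (m + 1)).eval (α + 1) * (Nat.factorial m) :=
    mul_pos (ascPochhammer_pos _ _ (by linarith)) (by positivity)
  set p := 2 * α + 1
  set C := (ascPochhammer ℝ (m + 1)).eval (α + 1) * (Nat.factorial m)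
  have hodd : Odd (2 * m + 1) := odd_two_mul_add_one m
  have hcont_odd : Continuous fun y : ℝ => (y / 2) ^ (2 * m + 1) / C * |y| ^ p := by fun_prop
  have hcont_even : Continuous fun y : ℝ => |y| ^ (2 * m + 1) / (2 ^ (2 * m + 1 + 1) * C) := by
    fun_prop
  simp_rw [theta_zero_mul_half_pow_mul_abs_rpow x hodd]
  rw [intervalIntegral.integral_add ((hcont_odd.const_mul _).intervalIntegrable _ _)
      (hcont_even.intervalIntegrable _ _),
    intervalIntegral.integral_const_mul, intervalIntegral.integral_div,
    integral_symm_eq_zero_of_odd (fun y => by rw [abs_neg, neg_div, hodd.neg_pow]; ring),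
    integral_abs_pow_symm _ (abs_nonneg x), Nat.factorial_succ, Nat.cast_mul,
    Even.pow_abs (n := 2 * m + 1 + 1) ⟨m + 1, by ring⟩, div_pow]
  simp only [C] at hC ⊢
  field_simp
  push_cast
  ring

theorem stmt2 (α : ℝ) (hα : α > -(1/2 : ℝ)) (x : ℝ) (hx : x ≠ 0) (m : ℕ) :
    (∫ y in (-|x|)..(|x|),
        (Real.sign x / (2 * |x| ^ (2 * α + 1)) + Real.sign y / (2 * |y| ^ (2 * α + 1))) *
          ((y / 2) ^ (2 * m + 1) / ((ascPochhammer ℝ (m + 1)).eval (α + 1) * (Nat.factorial m))) *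
          |y| ^ (2 * α + 1)) =
      (x / 2) ^ (2 * m + 2) /
        ((ascPochhammer ℝ (m + 1)).eval (α + 1) * (Nat.factorial (m + 1))) :=
  stmt2_general α hα x m
end
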